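/- In the solvable Lie algebra 𝔰 with [e₀,eᵢ] = μᵢeᵢ (all μᵢ ≠ 0, ordered μ₁ ≤ ... ≤ μₙ), suppose μ₁ < 0 < μₙ. Then the Weyl connection defined by E = αe₀ is non-positive if and only if (α = μ₁ and all negative eigenvalues equal μ₁) or (α = μₙ and all positive eigenvalues equal μₙ). -/
import Mathlib


open scoped RealInnerProductSpace

/-- The Weyl sectional curvature on the solvable extension `𝔰` (orthonormal basis
`e₀,…,eₙ`, `[e₀,eᵢ] = μᵢeᵢ`, `[eᵢ,eⱼ] = 0` for `i,j ≥ 1`) for the Weyl connection defined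
by `E = α e₀`, expressed in the Plücker coordinates `m_{ij} = xᵢyⱼ − xⱼyᵢ` of an
orthonormal frame `(X,Y)`:
`K̂(X,Y) = Σ_{k>0} μₖ(α − μₖ)m_{0k}² − Σ_{0<i<j} (α−μᵢ)(α−μⱼ)m_{ij}²`. -/
noncomputable def solvWeylK (n : ℕ) (μ : Fin (n + 1) → ℝ) (α : ℝ)
    (X Y : EuclideanSpace ℝ (Fin (n + 1))) : ℝ :=
  (∑ k ∈ Finset.univ.erase (0 : Fin (n + 1)),
      μ k * (α - μ k) * (X 0 * Y k - X k * Y 0) ^ 2)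
    - ∑ i ∈ Finset.univ.erase (0 : Fin (n + 1)),
        ∑ j ∈ Finset.univ.erase (0 : Fin (n + 1)),
          if i < j then (α - μ i) * (α - μ j) * (X i * Y j - X j * Y i) ^ 2 else 0

lemma solv_single_inner_self (n : ℕ) (a : Fin (n+1)) :
    ⟪(EuclideanSpace.single a (1:ℝ)), (EuclideanSpace.single a (1:ℝ))⟫ = 1 := by
  simp [EuclideanSpace.inner_single_left, EuclideanSpace.single_apply]

lemma solv_single_inner_ne (n : ℕ) (a b : Fin (n+1)) (h : a ≠ b) :
    ⟪(EuclideanSpace.single a (1:ℝ)), (EuclideanSpace.single b (1:ℝ))⟫ = 0 := by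
  simp [EuclideanSpace.inner_single_left, EuclideanSpace.single_apply, Ne.symm h]

lemma solv_evalA (n : ℕ) (μ : Fin (n + 1) → ℝ) (α : ℝ) (k : Fin (n+1)) (hk : k ≠ 0) :
    solvWeylK n μ α (EuclideanSpace.single 0 (1:ℝ)) (EuclideanSpace.single k (1:ℝ))
      = μ k * (α - μ k) := by
  unfold solvWeylK
  have h2 : (∑ i ∈ Finset.univ.erase (0 : Fin (n + 1)),
        ∑ j ∈ Finset.univ.erase (0 : Fin (n + 1)),
          if i < j then (α - μ i) * (α - μ j) *
            ((EuclideanSpace.single (0:Fin (n+1)) (1:ℝ)) i * (EuclideanSpace.single k (1:ℝ)) j -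
             (EuclideanSpace.single (0:Fin (n+1)) (1:ℝ)) j * (EuclideanSpace.single k (1:ℝ)) i) ^ 2 else 0) = 0 := by
    apply Finset.sum_eq_zero; intro i hi
    apply Finset.sum_eq_zero; intro j hj
    simp [EuclideanSpace.single_apply, (Finset.mem_erase.mp hi).1, (Finset.mem_erase.mp hj).1]
  rw [h2, sub_zero, Finset.sum_eq_single k]
  · simp [EuclideanSpace.single_apply, Ne.symm hk]
  · intro b hb hbk
    simp [EuclideanSpace.single_apply, (Finset.mem_erase.mp hb).1, hbk]
  · intro h; exact absurd (Finset.mem_erase.mpr ⟨hk, Finset.mem_univ k⟩) h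

lemma solv_evalB (n : ℕ) (μ : Fin (n + 1) → ℝ) (α : ℝ) (i j : Fin (n+1))
    (hi : i ≠ 0) (hj : j ≠ 0) (hij : i < j) :
    solvWeylK n μ α (EuclideanSpace.single i (1:ℝ)) (EuclideanSpace.single j (1:ℝ))
      = -((α - μ i) * (α - μ j)) := by
  unfold solvWeylK
  have h1 : (∑ k ∈ Finset.univ.erase (0 : Fin (n + 1)),
      μ k * (α - μ k) * ((EuclideanSpace.single i (1:ℝ)) 0 * (EuclideanSpace.single j (1:ℝ)) k - (EuclideanSpace.single i (1:ℝ)) k * (EuclideanSpace.single j (1:ℝ)) 0) ^ 2) = 0 := by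
    apply Finset.sum_eq_zero
    intro k hk
    simp [EuclideanSpace.single_apply, Ne.symm hi, Ne.symm hj]
  rw [h1, zero_sub, neg_inj, Finset.sum_eq_single i]
  · rw [Finset.sum_eq_single j]
    · simp [EuclideanSpace.single_apply, hij, hij.ne]
    · intro b hb hbj
      by_cases hbi : b = i
      · subst hbi; simp [hij.ne']
      · simp [EuclideanSpace.single_apply, hbj, hbi, Ne.symm hij.ne]
    · intro h; exact absurd (Finset.mem_erase.mpr ⟨hj, Finset.mem_univ j⟩) h
  · intro b hb hbi
    apply Finset.sum_eq_zero
    intro c hc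
    by_cases hbj : b = j
    · subst hbj
      by_cases hci : c = i
      · subst hci; simp [hij.asymm]
      · simp [EuclideanSpace.single_apply, hbi, hci]
    · simp [EuclideanSpace.single_apply, hbi, hbj]
  · intro h; exact absurd (Finset.mem_erase.mpr ⟨hi, Finset.mem_univ i⟩) h

lemma solv_aux_le (n : ℕ) (μ : Fin (n + 1) → ℝ) (α : ℝ)
    (hA : ∀ k : Fin (n+1), k ≠ 0 → μ k * (α - μ k) ≤ 0)
    (hB : ∀ i : Fin (n+1), i ≠ 0 → ∀ j : Fin (n+1), j ≠ 0 → 0 ≤ (α - μ i) * (α - μ j))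
    (X Y : EuclideanSpace ℝ (Fin (n + 1))) : solvWeylK n μ α X Y ≤ 0 := by
  unfold solvWeylK
  have h1 : (∑ k ∈ Finset.univ.erase (0 : Fin (n + 1)),
      μ k * (α - μ k) * (X 0 * Y k - X k * Y 0) ^ 2) ≤ 0 := by
    apply Finset.sum_nonpos
    intro k hk
    have hk0 := (Finset.mem_erase.mp hk).1
    nlinarith [sq_nonneg (X 0 * Y k - X k * Y 0), hA k hk0]
  have h2 : (0:ℝ) ≤ ∑ i ∈ Finset.univ.erase (0 : Fin (n + 1)),
        ∑ j ∈ Finset.univ.erase (0 : Fin (n + 1)),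
          if i < j then (α - μ i) * (α - μ j) * (X i * Y j - X j * Y i) ^ 2 else 0 := by
    apply Finset.sum_nonneg; intro i hi
    apply Finset.sum_nonneg; intro j hj
    by_cases hij : i < j
    · simp only [hij, if_true]
      exact mul_nonneg (hB i (Finset.mem_erase.mp hi).1 j (Finset.mem_erase.mp hj).1)
        (sq_nonneg _)
    · simp [hij]
  linarith

/-- In the solvable Lie algebra `𝔰` with `[e₀,eᵢ] = μᵢeᵢ` (all `μᵢ ≠ 0` for `i ≥ 1`,
ordered `μ₁ ≤ … ≤ μₙ`), if `μ₁ < 0 < μₙ` then the Weyl connection defined by `E = α e₀`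
is non-positive if and only if (`α = μ₁` and all negative eigenvalues equal `μ₁`) or
(`α = μₙ` and all positive eigenvalues equal `μₙ`). -/
theorem solv_weyl_nonpositive_iff_mixed (n : ℕ) (hn : 1 ≤ n)
    (μ : Fin (n + 1) → ℝ) (hμ0 : μ 0 = 0)
    (hne : ∀ i : Fin (n + 1), i ≠ 0 → μ i ≠ 0)
    (hmono : ∀ i j : Fin (n + 1), i ≠ 0 → i ≤ j → μ i ≤ μ j)
    (hneg : μ 1 < 0) (hpos : 0 < μ (Fin.last n)) (α : ℝ) :
    (∀ X Y : EuclideanSpace ℝ (Fin (n + 1)),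
        ⟪X, X⟫ = 1 → ⟪Y, Y⟫ = 1 → ⟪X, Y⟫ = 0 → solvWeylK n μ α X Y ≤ 0) ↔
      ((α = μ 1 ∧ ∀ i : Fin (n + 1), i ≠ 0 → μ i < 0 → μ i = μ 1) ∨
        (α = μ (Fin.last n) ∧
          ∀ i : Fin (n + 1), i ≠ 0 → 0 < μ i → μ i = μ (Fin.last n))) := by
  have hv1 : (1 : Fin (n+1)).val = 1 := by
    rw [Fin.val_one']; exact Nat.mod_eq_of_lt (by omega)
  have h1ne0 : (1 : Fin (n+1)) ≠ 0 := by
    intro h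
    rw [h] at hv1; simp at hv1
  have hlne0 : (Fin.last n) ≠ 0 := by
    intro h
    have := congrArg Fin.val h
    simp [Fin.val_last] at this; omega
  have hone_le : ∀ i : Fin (n+1), i ≠ 0 → (1 : Fin (n+1)) ≤ i := by
    intro i hi
    have hiv : i.val ≠ 0 := by
      intro hh; exact hi (Fin.ext (by simp [hh]))
    rw [Fin.le_def, hv1]; omega
  constructor
  · intro h
    have hA : ∀ k : Fin (n+1), k ≠ 0 → μ k * (α - μ k) ≤ 0 := by
      intro k hk
      have := h (EuclideanSpace.single 0 (1:ℝ)) (EuclideanSpace.single k (1:ℝ))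
        (solv_single_inner_self n 0) (solv_single_inner_self n k)
        (solv_single_inner_ne n 0 k (Ne.symm hk))
      rwa [solv_evalA n μ α k hk] at this
    have hα1 : μ 1 ≤ α := by nlinarith [hA 1 h1ne0]
    have hαn : α ≤ μ (Fin.last n) := by nlinarith [hA (Fin.last n) hlne0]
    have h1l : (1 : Fin (n+1)) ≠ Fin.last n := by
      intro hh; rw [hh] at hneg; linarith
    have h1ltl : (1 : Fin (n+1)) < Fin.last n := lt_of_le_of_ne (Fin.le_last 1) h1l
    have hBprod : 0 ≤ (α - μ 1) * (α - μ (Fin.last n)) := by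
      have := h (EuclideanSpace.single 1 (1:ℝ)) (EuclideanSpace.single (Fin.last n) (1:ℝ))
        (solv_single_inner_self n 1) (solv_single_inner_self n (Fin.last n))
        (solv_single_inner_ne n 1 (Fin.last n) h1l)
      rw [solv_evalB n μ α 1 (Fin.last n) h1ne0 hlne0 h1ltl] at this
      linarith
    have heq : (α - μ 1) * (α - μ (Fin.last n)) = 0 := by nlinarith
    rcases mul_eq_zero.mp heq with h0 | h0
    · left
      have hα : α = μ 1 := by linarith
      refine ⟨hα, fun i hi hineg => ?_⟩
      have hAi := hA i hi
      rw [hα] at hAi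
      have hm : μ 1 ≤ μ i := hmono 1 i h1ne0 (hone_le i hi)
      have : μ i ≤ μ 1 := by nlinarith
      linarith
    · right
      have hα : α = μ (Fin.last n) := by linarith
      refine ⟨hα, fun i hi hipos => ?_⟩
      have hAi := hA i hi
      rw [hα] at hAi
      have hm : μ i ≤ μ (Fin.last n) := hmono i (Fin.last n) hi (Fin.le_last i)
      have : μ (Fin.last n) ≤ μ i := by nlinarith
      linarith
  · intro h X Y _ _ _
    rcases h with ⟨hα, hall⟩ | ⟨hα, hall⟩
    · have hfac : ∀ i : Fin (n+1), i ≠ 0 → α - μ i ≤ 0 := by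
        intro i hi
        rcases (hne i hi).lt_or_gt with hlt | hgt
        · rw [hall i hi hlt, hα]; linarith
        · rw [hα]; linarith [hmono 1 i h1ne0 (hone_le i hi)]
      apply solv_aux_le
      · intro k hk
        rcases (hne k hk).lt_or_gt with hlt | hgt
        · have := hall k hk hlt
          rw [hα, this]; ring_nf; simp
        · nlinarith [hfac k hk]
      · intro i hi j hj
        nlinarith [hfac i hi, hfac j hj]
    · have hfac : ∀ i : Fin (n+1), i ≠ 0 → 0 ≤ α - μ i := by
        intro i hi
        rcases (hne i hi).lt_or_gt with hlt | hgt
        · rw [hα]; linarith [hmono i (Fin.last n) hi (Fin.le_last i)]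
        · rw [hall i hi hgt, hα]; linarith
      apply solv_aux_le
      · intro k hk
        rcases (hne k hk).lt_or_gt with hlt | hgt
        · nlinarith [hfac k hk]
        · have := hall k hk hgt
          rw [hα, this]; ring_nf; simp
      · intro i hi j hj
        exact mul_nonneg (hfac i hi) (hfac j hj)
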